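/- Let Γ_1 be a chordal graph on [n] = {1,…,n} such that 1,…,n is a perfect elimination order of Γ_1, and let Γ_2 be a chordal graph on {n+1,…,n+m} such that n+1,…,n+m is a perfect elimination order of Γ_2. Suppose that for every k ≥ 0 both HS_k(I(Γ_1^c)) ⊆ K[x_1,…,x_n] and HS_k(I(Γ_2^c)) ⊆ K[x_{n+1},…,x_{n+m}] have linear quotients. Let Γ be the disjoint union of Γ_1 and Γ_2 (vertex set [n+m], edge set E(Γ_1) ∪ E(Γ_2)) and set G = Γ^c. Then 1,2,…,n+m is a perfect elimination order of Γ = G^c and, for every k ≥ 0, the ideal HS_k(I(G)) ⊆ K[x_1,…,x_{n+m}] has linear quotients. -/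

import Mathlib

open MvPolynomial

/-- An ideal of `K[x_1,…,x_n]` is *generated by variables* if it is the span of the
image of a subset of the variables. -/
def genByVars {K : Type*} [Field K] {n : ℕ} (I : Ideal (MvPolynomial (Fin n) K)) : Prop :=
  ∃ T : Set (Fin n), I = Ideal.span (MvPolynomial.X '' T)
/-- A polynomial is a monomial (with coefficient `1`). -/
def IsMonomialElt {K : Type*} [Field K] {n : ℕ} (p : MvPolynomial (Fin n) K) : Prop :=
  ∃ a : Fin n →₀ ℕ, p = MvPolynomial.monomial a 1
/-- A monomial ideal has *linear quotients* if its minimal monomial generators admit an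
ordering `u 0, u 1, …` such that each colon ideal `(u_0,…,u_{i-1}) : u_i` is generated by a
subset of the variables.  (The conditions that the `u i` are monomials, pairwise
non-dividing, and generate `I` say exactly that they are the minimal monomial generators
of `I`.) -/
def HasLinearQuotients {K : Type*} [Field K] {n : ℕ}
    (I : Ideal (MvPolynomial (Fin n) K)) : Prop :=
  ∃ (m : ℕ) (u : Fin m → MvPolynomial (Fin n) K),
    (∀ i, IsMonomialElt (u i)) ∧
    (∀ i j, i ≠ j → ¬ u i ∣ u j) ∧
    Ideal.span (Set.range u) = I ∧
    ∀ i : Fin m,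
      genByVars ((Ideal.span (u '' {j | j < i})).colon (Ideal.span {u i}))
/-- The natural ordering `1, 2, …, n` of the vertices is a perfect elimination order of
`H`: for each vertex, its neighbourhood among the later vertices is a clique. -/
def natPEO {n : ℕ} (H : SimpleGraph (Fin n)) : Prop :=
  ∀ i j k : Fin n, i < j → i < k → j ≠ k → H.Adj i j → H.Adj i k → H.Adj j k

/-- The reversed ordering `n, n-1, …, 1` of the vertices is a perfect elimination order of
`H`: for each vertex, its neighbourhood among the earlier-labelled vertices is a clique. -/
def revPEO {n : ℕ} (H : SimpleGraph (Fin n)) : Prop :=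
  ∀ i j k : Fin n, j < i → k < i → j ≠ k → H.Adj i j → H.Adj i k → H.Adj j k
/-- The generating monomials of the `k`-th homological shift ideal `HS_k(I(G))`:
all monomials `x_A x_B` with `A, B` nonempty, `max A < min B`, `|A ∪ B| = k + 2` and
`{max A, b} ∈ E(G)` for all `b ∈ B`. -/
def HSgens (K : Type*) [Field K] {n : ℕ} (G : SimpleGraph (Fin n)) (k : ℕ) :
    Set (MvPolynomial (Fin n) K) :=
  {w | ∃ A B : Finset (Fin n), A.Nonempty ∧ B.Nonempty ∧
    (∀ a ∈ A, ∀ b ∈ B, a < b) ∧ (A ∪ B).card = k + 2 ∧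
    (∃ a0 ∈ A, (∀ a ∈ A, a ≤ a0) ∧ ∀ b ∈ B, G.Adj a0 b) ∧
    w = (∏ i ∈ A, MvPolynomial.X i) * ∏ i ∈ B, MvPolynomial.X i}
/-- A graph is *chordal* if it has no induced cycle of length greater than three,
i.e. every cycle of length at least four has a chord. -/
def IsChordal {V : Type*} (G : SimpleGraph V) : Prop :=
  ∀ m : ℕ, 4 ≤ m → ∀ f : ZMod m → V, Function.Injective f →
    (∀ i, G.Adj (f i) (f (i + 1))) →
      ∃ i j : ZMod m, G.Adj (f i) (f j) ∧ i ≠ j ∧ i + 1 ≠ j ∧ j + 1 ≠ i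
/-- The disjoint union of a graph `Γ₁` on `[n]` (encoded as `Fin n`, embedded in
`Fin (n+m)` via `Fin.castAdd`) and a graph `Γ₂` on `{n+1,…,n+m}` (encoded as `Fin m`,
embedded via `Fin.natAdd`). -/
def disjUnionGraph {n m : ℕ} (Γ₁ : SimpleGraph (Fin n)) (Γ₂ : SimpleGraph (Fin m)) :
    SimpleGraph (Fin (n + m)) where
  Adj u v := (∃ a b : Fin n, Γ₁.Adj a b ∧ u = Fin.castAdd m a ∧ v = Fin.castAdd m b) ∨
    (∃ a b : Fin m, Γ₂.Adj a b ∧ u = Fin.natAdd n a ∧ v = Fin.natAdd n b)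
  symm := by
    constructor
    intro u v h
    rcases h with ⟨a, b, hab, hu, hv⟩ | ⟨a, b, hab, hu, hv⟩
    · exact Or.inl ⟨b, a, hab.symm, hv, hu⟩
    · exact Or.inr ⟨b, a, hab.symm, hv, hu⟩
  loopless := by
    constructor
    intro u h
    rcases h with ⟨a, b, hab, hu, hv⟩ | ⟨a, b, hab, hu, hv⟩
    · refine hab.ne ?_
      have : (a : ℕ) = (b : ℕ) := by
        have := hu.symm.trans hv
        simpa [Fin.ext_iff] using this
      exact Fin.ext this
    · refine hab.ne ?_
      have : n + (a : ℕ) = n + (b : ℕ) := by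
        have := hu.symm.trans hv
        simpa [Fin.ext_iff] using this
      exact Fin.ext (by omega)

/-!
The generators of `HS_k(I(G))` are squarefree of degree `k + 2`, and for such ideals linear
quotients amount to an order of the supports in which, for every `T` listed before `S`, some
`v ∈ T \ S` makes `S ∪ {v}` contain a support listed before `S`.
In `G`, the complement of `Γ₁ ⊔ Γ₂`, each vertex of `[n]` is adjacent to every vertex after
`n`; so the supports of `HS_k(I(G))` are all `(k + 2)`-sets meeting both blocks, together with
the supports of `HS_k(I(Γ₁ᶜ))` and of `HS_k(I(Γ₂ᶜ))`. List the mixed sets first, in colex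
order, then the supports inside `[n]` and inside `{n+1, …, n+m}` in the orders given by the
hypotheses. A support inside one block is reached from any earlier set by swapping in a
vertex from the other block, which produces a mixed set.
-/

open Finset

section LinearQuotientRank

variable {α β ι κ : Type*} [DecidableEq α] [LinearOrder ι]

/-- Listing the squarefree monomials `x_S`, `S ∈ F`, of equal degree by increasing rank gives
linear quotients: the colon ideal at `S` is spanned by the `x_v` with `T ⊆ insert v S` for an
earlier `T`, and `exchange` says that these variables already cover every earlier `T`. -/
structure IsLinearQuotientRank (F : Set (Finset α)) (r : Finset α → ι) : Prop where
  injOn : Set.InjOn r F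
  exchange : ∀ S ∈ F, ∀ T ∈ F, r T < r S →
    ∃ v ∈ T, v ∉ S ∧ ∃ T' ∈ F, r T' < r S ∧ T' ⊆ insert v S

variable {F : Set (Finset α)} {r : Finset α → ι}

theorem IsLinearQuotientRank.comp_strictMono {ι' : Type*} [LinearOrder ι'] {f : ι → ι'}
    (h : IsLinearQuotientRank F r) (hf : StrictMono f) : IsLinearQuotientRank F (f ∘ r) where
  injOn := hf.injective.comp_injOn h.injOn
  exchange S hS T hT hlt := by
    obtain ⟨v, hvT, hvS, T', hT', hlt', hsub⟩ := h.exchange S hS T hT (hf.lt_iff_lt.mp hlt)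
    exact ⟨v, hvT, hvS, T', hT', hf hlt', hsub⟩

theorem IsLinearQuotientRank.map [DecidableEq β] (e : α ↪ β) (h : IsLinearQuotientRank F r) :
    IsLinearQuotientRank (Finset.map e '' F) (fun S => r (S.preimage e e.injective.injOn)) where
  injOn := by
    rintro _ ⟨A, hA, rfl⟩ _ ⟨B, hB, rfl⟩ hAB
    simp only [preimage_map] at hAB
    rw [h.injOn hA hB hAB]
  exchange := by
    rintro _ ⟨A, hA, rfl⟩ _ ⟨B, hB, rfl⟩ hlt
    simp only [preimage_map] at hlt
    obtain ⟨v, hvB, hvA, T', hT', hlt', hsub⟩ := h.exchange A hA B hB hlt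
    refine ⟨e v, mem_map_of_mem e hvB, by simpa using hvA, T'.map e, ⟨T', hT', rfl⟩,
      by simpa using hlt', ?_⟩
    rw [← map_insert]
    exact map_subset_map.mpr hsub

theorem IsLinearQuotientRank.exists_enum (h : IsLinearQuotientRank F r) (hF : F.Finite) :
    ∃ (N : ℕ) (f : Fin N → Finset α), Set.range f = F ∧ Function.Injective f ∧
      ∀ i j, j < i → ∃ v ∈ f j, v ∉ f i ∧ ∃ j' < i, f j' ⊆ insert v (f i) := by
  classical
  set e := (hF.toFinset.image r).orderEmbOfFin rfl
  have he : ∀ i, ∃ S ∈ F, r S = e i := fun i => by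
    obtain ⟨S, hS, hSe⟩ := mem_image.mp (orderEmbOfFin_mem _ rfl i)
    exact ⟨S, hF.mem_toFinset.mp hS, hSe⟩
  choose f hfF hfr using he
  have hmono : StrictMono (r ∘ f) := fun i j hij => by
    simp only [Function.comp_apply, hfr, e.lt_iff_lt, hij]
  have hrange : Set.range f = F := by
    refine Set.Subset.antisymm (Set.range_subset_iff.mpr hfF) fun S hS => ?_
    obtain ⟨i, hi⟩ : r S ∈ Set.range e := by
      rw [range_orderEmbOfFin]
      exact mem_image_of_mem r (hF.mem_toFinset.mpr hS)
    exact ⟨i, h.injOn (hfF i) hS (by rw [hfr, hi])⟩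
  refine ⟨_, f, hrange, hmono.injective.of_comp, fun i j hji => ?_⟩
  obtain ⟨v, hvT, hvS, T', hT', hlt, hsub⟩ := h.exchange _ (hfF i) _ (hfF j) (hmono hji)
  obtain ⟨j', rfl⟩ := hrange.symm ▸ hT'
  exact ⟨v, hvT, hvS, j', hmono.lt_iff_lt.mp hlt, hsub⟩

theorem isLinearQuotientRank_extend {N : ℕ} {f : Fin N → Finset α} (hf : Function.Injective f)
    (hex : ∀ i j, j < i → ∃ v ∈ f j, v ∉ f i ∧ ∃ j' < i, f j' ⊆ insert v (f i)) :
    IsLinearQuotientRank (Set.range f) (Function.extend f (fun i => (i : ℕ)) 0) where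
  injOn := by
    rintro _ ⟨i, rfl⟩ _ ⟨j, rfl⟩ hij
    rw [hf.extend_apply, hf.extend_apply] at hij
    rw [Fin.ext hij]
  exchange := by
    rintro _ ⟨i, rfl⟩ _ ⟨j, rfl⟩ hji
    rw [hf.extend_apply, hf.extend_apply] at hji
    obtain ⟨v, hvj, hvi, j', hj', hsub⟩ := hex i j hji
    exact ⟨v, hvj, hvi, f j', ⟨j', rfl⟩, by rwa [hf.extend_apply, hf.extend_apply], hsub⟩

theorem IsLinearQuotientRank.lex [LinearOrder κ] (c : Finset α → κ) (r : κ → Finset α → ι)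
    (hr : ∀ i, IsLinearQuotientRank {S ∈ F | c S = i} (r i))
    (hc : ∀ S ∈ F, ∀ T ∈ F, c T < c S →
      ∃ v ∈ T, v ∉ S ∧ ∃ T' ∈ F, c T' < c S ∧ T' ⊆ insert v S) :
    IsLinearQuotientRank F (fun S => toLex (c S, r (c S) S)) where
  injOn S hS T hT hST := by
    simp only [toLex_inj, Prod.mk.injEq] at hST
    obtain ⟨hc, hr'⟩ := hST
    exact (hr (c S)).injOn ⟨hS, rfl⟩ ⟨hT, hc.symm⟩ (by rw [hr', hc])
  exchange S hS T hT hlt := by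
    rcases Prod.Lex.toLex_lt_toLex.mp hlt with hlt | ⟨heq, hlt⟩
    · obtain ⟨v, hvT, hvS, T', hT', hlt', hsub⟩ := hc S hS T hT hlt
      exact ⟨v, hvT, hvS, T', hT', Prod.Lex.toLex_lt_toLex.mpr (Or.inl hlt'), hsub⟩
    · dsimp only at heq hlt
      rw [heq] at hlt
      obtain ⟨v, hvT, hvS, T', ⟨hT', hcT'⟩, hlt', hsub⟩ :=
        (hr (c S)).exchange S ⟨hS, rfl⟩ T ⟨hT, heq⟩ hlt
      exact ⟨v, hvT, hvS, T', hT', Prod.Lex.toLex_lt_toLex.mpr (Or.inr ⟨hcT', by rwa [hcT']⟩),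
        hsub⟩

end LinearQuotientRank

section Mixed

variable {α : Type*} {s : Set α} {S T : Finset α}

def IsMixed (s : Set α) (S : Finset α) : Prop :=
  (∃ x ∈ S, x ∈ s) ∧ ∃ y ∈ S, y ∉ s

theorem isMixed_iff_not_subset :
    IsMixed s S ↔ ¬ (S : Set α) ⊆ sᶜ ∧ ¬ (S : Set α) ⊆ s := by
  simp [IsMixed, Set.not_subset]

theorem isMixed_compl : IsMixed sᶜ S ↔ IsMixed s S := by
  simp [IsMixed, and_comm]

open Classical in
noncomputable def sideClass (s : Set α) (S : Finset α) : Fin 3 :=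
  if (S : Set α) ⊆ s then 1 else if (S : Set α) ⊆ sᶜ then 2 else 0

theorem sideClass_eq_zero_iff : sideClass s S = 0 ↔ IsMixed s S := by
  rw [isMixed_iff_not_subset, sideClass]
  split_ifs <;> simp_all

theorem sideClass_eq_one_iff : sideClass s S = 1 ↔ (S : Set α) ⊆ s := by
  rw [sideClass]
  split_ifs <;> simp_all

theorem sideClass_eq_two_iff (hS : S.Nonempty) : sideClass s S = 2 ↔ (S : Set α) ⊆ sᶜ := by
  obtain ⟨x, hx⟩ := hS
  have : ¬ ((S : Set α) ⊆ s ∧ (S : Set α) ⊆ sᶜ) := fun h => h.2 hx (h.1 hx)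
  rw [sideClass]
  split_ifs <;> simp_all

variable [DecidableEq α]

theorem isMixed_insert_erase {t : Set α} {v w : α} (hS : (S : Set α) ⊆ t)
    (hv : v ∉ t) (hw : w ∈ S) (hcard : 2 ≤ S.card) : IsMixed t (insert v (S.erase w)) := by
  obtain ⟨x, hx⟩ : (S.erase w).Nonempty := by
    rw [← card_pos, card_erase_of_mem hw]
    omega
  exact ⟨⟨x, mem_insert_of_mem hx, hS (mem_of_mem_erase hx)⟩, ⟨v, mem_insert_self v _, hv⟩⟩

theorem card_insert_erase {v w : α} (hv : v ∉ S) (hw : w ∈ S) :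
    (insert v (S.erase w)).card = S.card := by
  rw [card_insert_of_notMem (fun h => hv (mem_of_mem_erase h)), card_erase_add_one hw]

/-- `T` has an element on the other side of the pure set `S`. -/
theorem exists_isMixed_insert_erase_of_sideClass_lt (hS : 2 ≤ S.card) (hT : T.Nonempty)
    (hlt : sideClass s T < sideClass s S) :
    ∃ v ∈ T, v ∉ S ∧ ∃ w ∈ S, IsMixed s (insert v (S.erase w)) := by
  obtain ⟨w, hw⟩ : S.Nonempty := by rw [← card_pos]; omega
  have swap : ∀ t : Set α, (∀ U, IsMixed t U → IsMixed s U) → (S : Set α) ⊆ t →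
      (∃ v ∈ T, v ∉ t) → ∃ v ∈ T, v ∉ S ∧ ∃ w ∈ S, IsMixed s (insert v (S.erase w)) := by
    rintro t ht hSt ⟨v, hvT, hvt⟩
    exact ⟨v, hvT, fun h => hvt (hSt h), w, hw, ht _ (isMixed_insert_erase hSt hvt hw hS)⟩
  by_cases hSs : (S : Set α) ⊆ s
  · refine swap s (fun _ => id) hSs (sideClass_eq_zero_iff.mp ?_).2
    rw [sideClass_eq_one_iff.mpr hSs] at hlt
    omega
  · have hSs' : (S : Set α) ⊆ sᶜ := by
      by_contra h
      have := sideClass_eq_zero_iff.mpr (isMixed_iff_not_subset.mpr ⟨h, hSs⟩)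
      rw [this] at hlt
      exact absurd hlt (Fin.not_lt_zero _)
    refine swap sᶜ (fun _ => isMixed_compl.mp) hSs' (Set.not_subset.mp fun hTs => ?_)
    rw [(sideClass_eq_two_iff ⟨w, hw⟩).mpr hSs', (sideClass_eq_two_iff hT).mpr hTs] at hlt
    exact lt_irrefl _ hlt

/-- Mixed sets first, then the sets inside `s`, then those inside `sᶜ`. -/
theorem exists_isLinearQuotientRank_of_isMixed {ι : Type*} [LinearOrder ι]
    {F : Set (Finset α)} {d : ℕ} (hd : 2 ≤ d) (hF : ∀ S ∈ F, S.card = d)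
    (hmixed : ∀ S : Finset α, S.card = d → IsMixed s S → S ∈ F) {r₀ r₁ r₂ : Finset α → ι}
    (h₀ : IsLinearQuotientRank {S | S.card = d ∧ IsMixed s S} r₀)
    (h₁ : IsLinearQuotientRank {S ∈ F | (S : Set α) ⊆ s} r₁)
    (h₂ : IsLinearQuotientRank {S ∈ F | (S : Set α) ⊆ sᶜ} r₂) :
    ∃ r : Finset α → Fin 3 ×ₗ ι, IsLinearQuotientRank F r := by
  have hne : ∀ S ∈ F, S.Nonempty := fun S hS => by rw [← card_pos, hF S hS]; omega
  refine ⟨_, IsLinearQuotientRank.lex (sideClass s) ![r₀, r₁, r₂] (fun i => ?_) ?_⟩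
  · match i with
    | 0 =>
      rw [show {S ∈ F | sideClass s S = 0} = {S | S.card = d ∧ IsMixed s S} from
        Set.ext fun S => ⟨fun h => ⟨hF S h.1, sideClass_eq_zero_iff.mp h.2⟩,
          fun h => ⟨hmixed S h.1 h.2, sideClass_eq_zero_iff.mpr h.2⟩⟩]
      exact h₀
    | 1 =>
      rw [show {S ∈ F | sideClass s S = 1} = {S ∈ F | (S : Set α) ⊆ s} from
        Set.ext fun S => and_congr_right fun _ => sideClass_eq_one_iff]
      exact h₁
    | 2 =>
      rw [show {S ∈ F | sideClass s S = 2} = {S ∈ F | (S : Set α) ⊆ sᶜ} from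
        Set.ext fun S => and_congr_right fun hS => sideClass_eq_two_iff (hne S hS)]
      exact h₂
  · intro S hS T hT hlt
    obtain ⟨v, hvT, hvS, w, hw, hmix⟩ :=
      exists_isMixed_insert_erase_of_sideClass_lt (hF S hS ▸ hd) (hne T hT) hlt
    refine ⟨v, hvT, hvS, _, hmixed _ ((card_insert_erase hvS hw).trans (hF S hS)) hmix, ?_,
      insert_subset_insert v (erase_subset w S)⟩
    rw [sideClass_eq_zero_iff.mpr hmix]
    exact (Fin.zero_le _).trans_lt hlt

variable [LinearOrder α]

/-- `w ∈ S \ T` dominating `T \ S` is what witnesses `T < S` in colex order. -/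
theorem exists_isMixed_insert_erase_of_forall_lt (hs : IsLowerSet s)
    (hS : IsMixed s S) (hT : IsMixed s T) (hcard : T.card = S.card) {w : α} (hwS : w ∈ S)
    (hwT : w ∉ T) (hlt : ∀ b ∈ T, b ∉ S → b < w) :
    ∃ v ∈ T, v ∉ S ∧ IsMixed s (insert v (S.erase w)) := by
  have hmem : ∀ {v x}, x ∈ S → x ≠ w → x ∈ insert v (S.erase w) := fun hx hxw =>
    mem_insert_of_mem (mem_erase.mpr ⟨hxw, hx⟩)
  obtain ⟨v₀, hv₀T, hv₀S⟩ : ∃ v ∈ T, v ∉ S := by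
    by_contra! h
    exact hwT (eq_of_subset_of_card_le h hcard.ge ▸ hwS)
  by_cases hws : w ∈ s
  · obtain ⟨y, hyS, hys⟩ := hS.2
    refine ⟨v₀, hv₀T, hv₀S, ⟨v₀, mem_insert_self _ _, hs (hlt v₀ hv₀T hv₀S).le hws⟩,
      ⟨y, hmem hyS (by rintro rfl; exact hys hws), hys⟩⟩
  by_cases hout : ∃ v ∈ T, v ∉ S ∧ v ∉ s
  · obtain ⟨v, hvT, hvS, hvs⟩ := hout
    obtain ⟨x, hxS, hxs⟩ := hS.1
    exact ⟨v, hvT, hvS, ⟨x, hmem hxS (by rintro rfl; exact hws hxs), hxs⟩,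
      ⟨v, mem_insert_self _ _, hvs⟩⟩
  · push Not at hout
    obtain ⟨y, hyT, hys⟩ := hT.2
    have hyS : y ∈ S := by_contra fun hyS => hys (hout y hyT hyS)
    exact ⟨v₀, hv₀T, hv₀S, ⟨v₀, mem_insert_self _ _, hout v₀ hv₀T hv₀S⟩,
      ⟨y, hmem hyS (by rintro rfl; exact hwT hyT), hys⟩⟩

theorem isLinearQuotientRank_toColex_isMixed (hs : IsLowerSet s) (d : ℕ) :
    IsLinearQuotientRank {S : Finset α | S.card = d ∧ IsMixed s S} toColex where
  injOn := toColex.injective.injOn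
  exchange := by
    rintro S ⟨hSd, hS⟩ T ⟨hTd, hT⟩ hlt
    obtain ⟨w, hwS, hwT, hw⟩ := Colex.toColex_lt_toColex_iff_exists_forall_lt.mp hlt
    obtain ⟨v, hvT, hvS, hmix⟩ :=
      exists_isMixed_insert_erase_of_forall_lt hs hS hT (hTd.trans hSd.symm) hwS hwT hw
    have hvw : v < w := hw v hvT hvS
    refine ⟨v, hvT, hvS, insert v (S.erase w), ⟨(card_insert_erase hvS hwS).trans hSd, hmix⟩,
      Colex.toColex_lt_toColex_iff_exists_forall_lt.mpr ⟨w, hwS, ?_, ?_⟩,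
      insert_subset_insert v (erase_subset w S)⟩
    · simp [hvw.ne']
    · intro b hb hbS
      obtain rfl | hb := mem_insert.mp hb
      · exact hvw
      · exact absurd (mem_of_mem_erase hb) hbS

end Mixed

section SquarefreeMonomial

variable {σ R : Type*} [CommSemiring R]

noncomputable def sqfreeExp (S : Finset σ) : σ →₀ ℕ := ∑ i ∈ S, Finsupp.single i 1

theorem prod_X_eq_monomial_sqfreeExp (S : Finset σ) :
    ∏ i ∈ S, (X i : MvPolynomial σ R) = monomial (sqfreeExp S) 1 := by
  rw [sqfreeExp, monomial_sum_one]
  rfl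

theorem image_prod_X_eq (𝒜 : Set (Finset σ)) :
    (fun T => ∏ i ∈ T, (X i : MvPolynomial σ R)) '' 𝒜 =
      (fun a => monomial a 1) '' (sqfreeExp '' 𝒜) := by
  rw [Set.image_image]
  simp only [prod_X_eq_monomial_sqfreeExp]

theorem monomial_mem_span_monomial_image_iff [Nontrivial R] {s : Set (σ →₀ ℕ)} {b : σ →₀ ℕ} :
    monomial b (1 : R) ∈ Ideal.span ((fun a => monomial a 1) '' s) ↔ ∃ a ∈ s, a ≤ b := by
  classical
  simp [mem_ideal_span_monomial_image, support_monomial]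

theorem subset_of_span_monomial_image_eq [Nontrivial R] {s t : Set (σ →₀ ℕ)}
    (ht : IsAntichain (· ≤ ·) t)
    (h : Ideal.span ((fun a => monomial a (1 : R)) '' s) =
      Ideal.span ((fun a => monomial a (1 : R)) '' t)) : t ⊆ s := by
  have hmem : ∀ {c : σ →₀ ℕ} {u : Set (σ →₀ ℕ)}, c ∈ u →
      monomial c (1 : R) ∈ Ideal.span ((fun a => monomial a (1 : R)) '' u) :=
    fun hc => Ideal.subset_span ⟨_, hc, rfl⟩
  intro b hb
  obtain ⟨a, ha, hab⟩ := monomial_mem_span_monomial_image_iff.mp (h ▸ hmem hb)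
  obtain ⟨b', hb', hb'a⟩ := monomial_mem_span_monomial_image_iff.mp (h ▸ hmem ha)
  obtain rfl := ht.eq hb' hb (hb'a.trans hab)
  rwa [← le_antisymm hab hb'a]

theorem eq_of_span_monomial_image_eq [Nontrivial R] {s t : Set (σ →₀ ℕ)}
    (hs : IsAntichain (· ≤ ·) s) (ht : IsAntichain (· ≤ ·) t)
    (h : Ideal.span ((fun a => monomial a (1 : R)) '' s) =
      Ideal.span ((fun a => monomial a (1 : R)) '' t)) : s = t :=
  (subset_of_span_monomial_image_eq hs h.symm).antisymm (subset_of_span_monomial_image_eq ht h)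

variable [DecidableEq σ]

theorem sqfreeExp_apply (S : Finset σ) (v : σ) : sqfreeExp S v = if v ∈ S then 1 else 0 := by
  simp [sqfreeExp, Finsupp.finsetSum_apply, Finsupp.single_apply]

theorem sqfreeExp_le_iff {S T : Finset σ} : sqfreeExp T ≤ sqfreeExp S ↔ T ⊆ S := by
  refine ⟨fun h v hv => ?_, fun h v => ?_⟩
  · have := h v
    simp only [sqfreeExp_apply, hv, if_true] at this
    by_contra hvS
    simp [hvS] at this
  · simp only [sqfreeExp_apply]
    split_ifs with hT hS
    exacts [le_rfl, absurd (h hT) hS, Nat.zero_le _, le_rfl]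

theorem sqfreeExp_injective : Function.Injective (sqfreeExp : Finset σ → σ →₀ ℕ) :=
  fun _ _ h => (sqfreeExp_le_iff.mp h.le).antisymm (sqfreeExp_le_iff.mp h.ge)

theorem sqfreeExp_le_single_add_iff {S T : Finset σ} {v : σ} :
    sqfreeExp T ≤ Finsupp.single v 1 + sqfreeExp S ↔ T ⊆ insert v S := by
  refine ⟨fun h u hu => ?_, fun h u => ?_⟩
  · have := h u
    simp only [Finsupp.add_apply, Finsupp.single_apply, sqfreeExp_apply, hu] at this
    by_contra huS
    rw [mem_insert, not_or] at huS
    simp [Ne.symm huS.1, huS.2] at this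
  · have := @h u
    simp only [Finsupp.add_apply, Finsupp.single_apply, sqfreeExp_apply, mem_insert] at this ⊢
    split_ifs at this ⊢ <;> simp_all

variable [Nontrivial R]

theorem prod_X_dvd_prod_X_iff {S T : Finset σ} :
    ∏ i ∈ T, (X i : MvPolynomial σ R) ∣ ∏ i ∈ S, X i ↔ T ⊆ S := by
  simp [prod_X_eq_monomial_sqfreeExp, monomial_dvd_monomial, sqfreeExp_le_iff]

theorem prod_X_mem_span_iff {𝒜 : Set (Finset σ)} {S : Finset σ} :
    ∏ i ∈ S, (X i : MvPolynomial σ R) ∈ Ideal.span ((fun T => ∏ i ∈ T, X i) '' 𝒜) ↔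
      ∃ T ∈ 𝒜, T ⊆ S := by
  rw [image_prod_X_eq, prod_X_eq_monomial_sqfreeExp, monomial_mem_span_monomial_image_iff]
  simp [sqfreeExp_le_iff]

theorem X_mul_prod_X_mem_span_iff {𝒜 : Set (Finset σ)} {S : Finset σ} {v : σ} :
    X v * ∏ i ∈ S, (X i : MvPolynomial σ R) ∈ Ideal.span ((fun T => ∏ i ∈ T, X i) '' 𝒜) ↔
      ∃ T ∈ 𝒜, T ⊆ insert v S := by
  rw [image_prod_X_eq, prod_X_eq_monomial_sqfreeExp, X, monomial_mul, one_mul,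
    monomial_mem_span_monomial_image_iff]
  simp [sqfreeExp_le_single_add_iff]

/-- If `x_T` divides `m x_S`, then `x_v` divides `m` for every `v ∈ T \ S`. -/
theorem colon_span_prod_X_eq {𝒜 : Set (Finset σ)} {S : Finset σ}
    (hex : ∀ T ∈ 𝒜, ∃ v ∈ T, v ∉ S ∧ ∃ T' ∈ 𝒜, T' ⊆ insert v S) :
    (Ideal.span ((fun T => ∏ i ∈ T, (X i : MvPolynomial σ R)) '' 𝒜)).colon
        (Ideal.span {∏ i ∈ S, (X i : MvPolynomial σ R)}) =
      Ideal.span (X '' {v | ∃ T ∈ 𝒜, T ⊆ insert v S}) := by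
  apply le_antisymm
  · intro p hp
    rw [Ideal.mem_colon_span_singleton, image_prod_X_eq, prod_X_eq_monomial_sqfreeExp,
      mem_ideal_span_monomial_image] at hp
    rw [mem_ideal_span_X_image]
    intro a ha
    have hsupp : a + sqfreeExp S ∈ (p * monomial (sqfreeExp S) 1).support := by
      rw [mem_support_iff, coeff_mul_monomial, mul_one]
      exact mem_support_iff.mp ha
    obtain ⟨_, ⟨T, hT, rfl⟩, hle⟩ := hp _ hsupp
    obtain ⟨v, hvT, hvS, T', hT', hsub⟩ := hex T hT
    refine ⟨v, ⟨T', hT', hsub⟩, ?_⟩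
    have := hle v
    simp only [Finsupp.add_apply, sqfreeExp_apply, hvT, hvS, if_true, if_false] at this
    omega
  · rw [Ideal.span_le]
    rintro _ ⟨v, hv, rfl⟩
    exact Ideal.mem_colon_span_singleton.mpr (X_mul_prod_X_mem_span_iff.mpr hv)

theorem exists_exchange_of_colon_eq_span_X {𝒜 : Set (Finset σ)} {S T : Finset σ} {V : Set σ}
    (h : (Ideal.span ((fun T => ∏ i ∈ T, (X i : MvPolynomial σ R)) '' 𝒜)).colon
        (Ideal.span {∏ i ∈ S, (X i : MvPolynomial σ R)}) = Ideal.span (X '' V)) (hT : T ∈ 𝒜) :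
    ∃ v ∈ T, v ∉ S ∧ ∃ T' ∈ 𝒜, T' ⊆ insert v S := by
  have hTS : ∏ i ∈ T \ S, (X i : MvPolynomial σ R) ∈ Ideal.span (X '' V) := by
    rw [← h, Ideal.mem_colon_span_singleton, ← prod_union sdiff_disjoint, prod_X_mem_span_iff]
    exact ⟨T, hT, subset_union_left.trans (sdiff_union_self_eq_union).superset⟩
  rw [prod_X_eq_monomial_sqfreeExp, mem_ideal_span_X_image] at hTS
  obtain ⟨v, hvV, hv⟩ := hTS (sqfreeExp (T \ S)) (by simp)
  have hvTS : v ∈ T \ S := by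
    by_contra hvTS
    simp [sqfreeExp_apply, hvTS] at hv
  have hXv : (X v : MvPolynomial σ R) ∈ Ideal.span (X '' V) := Ideal.subset_span ⟨v, hvV, rfl⟩
  rw [← h, Ideal.mem_colon_span_singleton, X_mul_prod_X_mem_span_iff] at hXv
  exact ⟨v, (mem_sdiff.mp hvTS).1, (mem_sdiff.mp hvTS).2, hXv⟩

end SquarefreeMonomial

section HasLinearQuotients

variable {K ι : Type*} [Field K] [LinearOrder ι] {P d : ℕ} {F : Set (Finset (Fin P))}

theorem hasLinearQuotients_of_isLinearQuotientRank {r : Finset (Fin P) → ι}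
    (hF : ∀ S ∈ F, S.card = d) (hr : IsLinearQuotientRank F r) :
    HasLinearQuotients (Ideal.span ((fun S => ∏ i ∈ S, (X i : MvPolynomial (Fin P) K)) '' F)) := by
  obtain ⟨N, f, rfl, hinj, hex⟩ := hr.exists_enum (Set.toFinite F)
  refine ⟨N, fun i => ∏ v ∈ f i, X v, fun i => ⟨_, prod_X_eq_monomial_sqfreeExp _⟩,
    fun i j hij hdvd => ?_, by rw [← Set.range_comp]; rfl,
    fun i => ⟨{v | ∃ T ∈ f '' {j | j < i}, T ⊆ insert v (f i)}, ?_⟩⟩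
  · refine hij (hinj (eq_of_subset_of_card_le (prod_X_dvd_prod_X_iff.mp hdvd) ?_))
    rw [hF _ ⟨i, rfl⟩, hF _ ⟨j, rfl⟩]
  · rw [← Set.image_image (fun S => ∏ v ∈ S, (X v : MvPolynomial (Fin P) K))]
    refine colon_span_prod_X_eq ?_
    rintro _ ⟨j, hji, rfl⟩
    obtain ⟨v, hvj, hvi, j', hj'i, hsub⟩ := hex i j hji
    exact ⟨v, hvj, hvi, f j', ⟨j', hj'i, rfl⟩, hsub⟩

theorem exists_isLinearQuotientRank_of_hasLinearQuotients (hF : ∀ S ∈ F, S.card = d)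
    (h : HasLinearQuotients
      (Ideal.span ((fun S => ∏ i ∈ S, (X i : MvPolynomial (Fin P) K)) '' F))) :
    ∃ r : Finset (Fin P) → ℕ, IsLinearQuotientRank F r := by
  classical
  obtain ⟨N, u, hmon, hdvd, hspan, hcol⟩ := h
  choose a ha using hmon
  have hrange : Set.range a = sqfreeExp '' F := by
    refine eq_of_span_monomial_image_eq (R := K) ?_ ?_ ?_
    · rintro _ ⟨i, rfl⟩ _ ⟨j, rfl⟩ hne hle
      refine hdvd i j (fun h => hne (h ▸ rfl)) ?_
      rw [ha, ha]
      exact monomial_dvd_monomial.mpr ⟨Or.inr hle, one_dvd _⟩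
    · rintro _ ⟨S, hS, rfl⟩ _ ⟨T, hT, rfl⟩ hne hle
      exact hne (congrArg sqfreeExp (eq_of_subset_of_card_le (sqfreeExp_le_iff.mp hle)
        (by rw [hF S hS, hF T hT])))
    · rw [← image_prod_X_eq, ← hspan, ← Set.range_comp]
      exact congrArg _ (congrArg _ (funext fun i => (ha i).symm))
  choose Sf hSfF hSfa using fun i => (hrange ▸ Set.mem_range_self i : a i ∈ sqfreeExp '' F)
  obtain rfl : u = fun i => ∏ v ∈ Sf i, X v := funext fun i => by
    rw [ha, ← hSfa, prod_X_eq_monomial_sqfreeExp]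
  have hinj : Function.Injective Sf := fun i j hij => by
    by_contra hne
    exact hdvd i j hne (by simp only [hij, dvd_refl])
  have hSf : Set.range Sf = F := by
    refine Set.Subset.antisymm (Set.range_subset_iff.mpr hSfF) fun S hS => ?_
    obtain ⟨i, hi⟩ : sqfreeExp S ∈ Set.range a := hrange ▸ Set.mem_image_of_mem _ hS
    exact ⟨i, sqfreeExp_injective (by rw [hSfa, hi])⟩
  refine ⟨_, hSf ▸ isLinearQuotientRank_extend hinj fun i j hji => ?_⟩
  obtain ⟨V, hV⟩ := hcol i
  rw [← Set.image_image (fun S => ∏ v ∈ S, (X v : MvPolynomial (Fin P) K))] at hV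
  obtain ⟨v, hvj, hvi, _, ⟨j', hj'i, rfl⟩, hsub⟩ :=
    exists_exchange_of_colon_eq_span_X hV ⟨j, hji, rfl⟩
  exact ⟨v, hvj, hvi, j', hj'i, hsub⟩

end HasLinearQuotients

section HSSupports

variable {V W : Type*} [LinearOrder V] [LinearOrder W]

/-- The supports `A ∪ B` of the generators `x_A x_B` of `HS_k(I(G))`: recording the vertex
`v = max A` is enough, as then `A = {a ∈ S | a ≤ v}` and `B = {b ∈ S | v < b}`. -/
def hsSupports (G : SimpleGraph V) (k : ℕ) : Set (Finset V) :=
  {S | S.card = k + 2 ∧ ∃ v ∈ S, (∃ b ∈ S, v < b) ∧ ∀ b ∈ S, v < b → G.Adj v b}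

theorem card_eq_of_mem_hsSupports {G : SimpleGraph V} {k : ℕ} {S : Finset V}
    (h : S ∈ hsSupports G k) : S.card = k + 2 :=
  h.1

theorem HSgens_eq_image {K : Type*} [Field K] {n : ℕ} (G : SimpleGraph (Fin n)) (k : ℕ) :
    HSgens K G k = (fun S => ∏ i ∈ S, X i) '' hsSupports G k := by
  ext w
  constructor
  · rintro ⟨A, B, -, ⟨b, hb⟩, hlt, hcard, ⟨v, hvA, hvmax, hadj⟩, rfl⟩
    have hdisj : Disjoint A B := disjoint_left.mpr fun a haA haB => lt_irrefl a (hlt a haA a haB)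
    refine ⟨A ∪ B, ⟨hcard, v, mem_union_left _ hvA, ⟨b, mem_union_right _ hb, hlt v hvA b hb⟩,
      fun c hc hvc => ?_⟩, prod_union hdisj⟩
    rcases mem_union.mp hc with hcA | hcB
    · exact absurd (hvmax c hcA) (not_le.mpr hvc)
    · exact hadj c hcB
  · rintro ⟨S, ⟨hcard, v, hvS, ⟨b, hbS, hvb⟩, hadj⟩, rfl⟩
    have hdisj : Disjoint (S.filter (· ≤ v)) (S.filter (v < ·)) :=
      disjoint_filter.mpr fun _ _ h h' => not_le.mpr h' h
    have hunion : S.filter (· ≤ v) ∪ S.filter (v < ·) = S := by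
      rw [← filter_or]
      exact filter_true_of_mem fun x _ => le_or_gt x v
    refine ⟨S.filter (· ≤ v), S.filter (v < ·), ⟨v, mem_filter.mpr ⟨hvS, le_rfl⟩⟩,
      ⟨b, mem_filter.mpr ⟨hbS, hvb⟩⟩, fun a ha c hc => ?_, by rw [hunion, hcard],
      ⟨v, mem_filter.mpr ⟨hvS, le_rfl⟩, fun a ha => (mem_filter.mp ha).2,
        fun c hc => hadj c (mem_filter.mp hc).1 (mem_filter.mp hc).2⟩, ?_⟩
    · exact (mem_filter.mp ha).2.trans_lt (mem_filter.mp hc).2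
    · rw [← prod_union hdisj, hunion]

theorem map_mem_hsSupports_iff (e : V ↪o W) {H : SimpleGraph W} {S : Finset V} {k : ℕ} :
    S.map e.toEmbedding ∈ hsSupports H k ↔ S ∈ hsSupports (H.comap e) k := by
  simp [hsSupports]

theorem hsSupports_filter_subset_range [DecidableEq W] (e : V ↪o W) (H : SimpleGraph W) (k : ℕ) :
    {S ∈ hsSupports H k | (S : Set W) ⊆ Set.range e} =
      Finset.map e.toEmbedding '' hsSupports (H.comap e) k := by
  ext S
  constructor
  · rintro ⟨hS, hSe⟩
    rw [← Set.image_univ, subset_set_image_iff] at hSe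
    obtain ⟨A, -, rfl⟩ := hSe
    have hA : A.image e = A.map e.toEmbedding := (map_eq_image _ _).symm
    rw [hA] at hS ⊢
    exact ⟨A, (map_mem_hsSupports_iff e).mp hS, rfl⟩
  · rintro ⟨A, hA, rfl⟩
    refine ⟨(map_mem_hsSupports_iff e).mpr hA, ?_⟩
    simp

theorem mem_hsSupports_of_isMixed {s : Set V} (hs : IsLowerSet s) {G : SimpleGraph V}
    (hG : ∀ x ∈ s, ∀ y ∉ s, G.Adj x y) {S : Finset V} {k : ℕ} (hcard : S.card = k + 2)
    (hS : IsMixed s S) : S ∈ hsSupports G k := by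
  classical
  obtain ⟨⟨x, hxS, hxs⟩, ⟨y, hyS, hys⟩⟩ := hS
  have hne : (S.filter (· ∈ s)).Nonempty := ⟨x, mem_filter.mpr ⟨hxS, hxs⟩⟩
  obtain ⟨hvS, hvs⟩ := mem_filter.mp ((S.filter (· ∈ s)).max'_mem hne)
  have hlt : ∀ b ∈ S, b ∉ s → (S.filter (· ∈ s)).max' hne < b := fun b _ hb =>
    lt_of_not_ge fun hle => hb (hs hle hvs)
  refine ⟨hcard, _, hvS, ⟨y, hyS, hlt y hyS hys⟩, fun b hbS hvb => hG _ hvs b fun hbs => ?_⟩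
  exact absurd ((S.filter (· ∈ s)).le_max' b (mem_filter.mpr ⟨hbS, hbs⟩)) (not_le.mpr hvb)

end HSSupports

theorem SimpleGraph.comap_compl {V W : Type*} {f : V → W} (hf : Function.Injective f)
    (G : SimpleGraph W) : Gᶜ.comap f = (G.comap f)ᶜ := by
  ext
  simp [hf.ne_iff]

/-- Transports colex ranks to `ℕ`, the rank type of the two pure classes. -/
theorem strictMono_sum_two_pow_val {P : ℕ} :
    StrictMono fun S : Colex (Finset (Fin P)) => ∑ i ∈ ofColex S, 2 ^ (i : ℕ) := by
  intro S T h
  show ∑ i ∈ ofColex S, 2 ^ (i : ℕ) < ∑ i ∈ ofColex T, 2 ^ (i : ℕ)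
  have h' := (Colex.toColex_image_lt_toColex_image (s := ofColex S) (t := ofColex T)
    Fin.val_strictMono).mpr h
  rwa [← geomSum_lt_geomSum_iff_toColex_lt_toColex le_rfl,
    sum_image Fin.val_injective.injOn, sum_image Fin.val_injective.injOn] at h'

theorem Fin.castAdd_ne_natAdd {n m : ℕ} (a : Fin n) (b : Fin m) :
    Fin.castAdd m a ≠ Fin.natAdd n b := by
  simp only [ne_eq, Fin.ext_iff, Fin.val_castAdd, Fin.val_natAdd]
  omega

theorem Fin.range_castAddOrderEmb (n m : ℕ) :
    Set.range (Fin.castAddOrderEmb m : Fin n ↪o Fin (n + m)) = {x : Fin (n + m) | (x : ℕ) < n} := by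
  ext x
  simp only [Set.mem_range, Fin.castAddOrderEmb_apply]
  exact ⟨fun ⟨y, hy⟩ => hy ▸ y.isLt, fun h => ⟨⟨x, h⟩, rfl⟩⟩

theorem Fin.range_natAddOrderEmb (n m : ℕ) :
    Set.range (Fin.natAddOrderEmb n : Fin m ↪o Fin (n + m)) = {x : Fin (n + m) | (x : ℕ) < n}ᶜ := by
  ext x
  simp only [Set.mem_range, Set.mem_compl_iff, Set.mem_ofPred_eq, not_lt]
  exact ⟨fun ⟨y, hy⟩ => hy ▸ Nat.le_add_right _ _,
    fun h => ⟨⟨x - n, by omega⟩, Fin.ext (by simp; omega)⟩⟩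

section DisjUnionGraph

variable {n m : ℕ} (Γ₁ : SimpleGraph (Fin n)) (Γ₂ : SimpleGraph (Fin m))

theorem disjUnionGraph_comap_castAddOrderEmb :
    (disjUnionGraph Γ₁ Γ₂).comap (Fin.castAddOrderEmb m) = Γ₁ := by
  ext a b
  refine ⟨?_, fun h => Or.inl ⟨a, b, h, rfl, rfl⟩⟩
  rintro (⟨a', b', h, ha, hb⟩ | ⟨a', -, -, ha, -⟩)
  · rw [Fin.castAddOrderEmb_apply, Fin.castAdd_inj] at ha hb
    rwa [ha, hb]
  · exact absurd ha (Fin.castAdd_ne_natAdd a a')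

theorem disjUnionGraph_comap_natAddOrderEmb :
    (disjUnionGraph Γ₁ Γ₂).comap (Fin.natAddOrderEmb n) = Γ₂ := by
  ext a b
  refine ⟨?_, fun h => Or.inr ⟨a, b, h, rfl, rfl⟩⟩
  rintro (⟨a', -, -, ha, -⟩ | ⟨a', b', h, ha, hb⟩)
  · exact absurd ha.symm (Fin.castAdd_ne_natAdd a' a)
  · rw [Fin.natAddOrderEmb_apply, Fin.natAdd_inj] at ha hb
    rwa [ha, hb]

theorem compl_disjUnionGraph_adj {x y : Fin (n + m)} (hx : (x : ℕ) < n) (hy : ¬ (y : ℕ) < n) :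
    (disjUnionGraph Γ₁ Γ₂)ᶜ.Adj x y := by
  refine ⟨fun h => hy (h ▸ hx), fun h => hy ?_⟩
  rcases h with ⟨a, b, -, rfl, rfl⟩ | ⟨a, b, -, rfl, rfl⟩ <;> simp_all

theorem natPEO_disjUnionGraph (hp1 : natPEO Γ₁) (hp2 : natPEO Γ₂) :
    natPEO (disjUnionGraph Γ₁ Γ₂) := by
  intro i j k hij hik hjk hj hk
  rcases hj with ⟨a, b, hab, rfl, rfl⟩ | ⟨a, b, hab, rfl, rfl⟩ <;>
    rcases hk with ⟨a', c, hac, ha, rfl⟩ | ⟨a', c, hac, ha, rfl⟩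
  · obtain rfl := Fin.castAdd_inj.mp ha
    exact Or.inl ⟨b, c, hp1 a b c hij hik (fun h => hjk (h ▸ rfl)) hab hac, rfl, rfl⟩
  · exact absurd ha (Fin.castAdd_ne_natAdd a a')
  · exact absurd ha.symm (Fin.castAdd_ne_natAdd a' a)
  · obtain rfl := (Fin.natAdd_inj n).mp ha
    exact Or.inr ⟨b, c, hp2 a b c ((Fin.natAdd_lt_natAdd_iff n).mp hij)
      ((Fin.natAdd_lt_natAdd_iff n).mp hik) (fun h => hjk (h ▸ rfl)) hab hac, rfl, rfl⟩

theorem exists_isLinearQuotientRank_hsSupports_compl_disjUnionGraph {k : ℕ}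
    {r₁ : Finset (Fin n) → ℕ} {r₂ : Finset (Fin m) → ℕ}
    (h₁ : IsLinearQuotientRank (hsSupports Γ₁ᶜ k) r₁)
    (h₂ : IsLinearQuotientRank (hsSupports Γ₂ᶜ k) r₂) :
    ∃ r : Finset (Fin (n + m)) → Fin 3 ×ₗ ℕ,
      IsLinearQuotientRank (hsSupports (disjUnionGraph Γ₁ Γ₂)ᶜ k) r := by
  have hs : IsLowerSet {x : Fin (n + m) | (x : ℕ) < n} := fun _ _ hba ha =>
    (Fin.le_iff_val_le_val.mp hba).trans_lt ha
  have h₁' := h₁.map (Fin.castAddOrderEmb m).toEmbedding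
  rw [← disjUnionGraph_comap_castAddOrderEmb Γ₁ Γ₂,
    ← SimpleGraph.comap_compl (Fin.castAddOrderEmb m).injective,
    ← hsSupports_filter_subset_range, Fin.range_castAddOrderEmb] at h₁'
  have h₂' := h₂.map (Fin.natAddOrderEmb n).toEmbedding
  rw [← disjUnionGraph_comap_natAddOrderEmb Γ₁ Γ₂,
    ← SimpleGraph.comap_compl (Fin.natAddOrderEmb n).injective,
    ← hsSupports_filter_subset_range, Fin.range_natAddOrderEmb] at h₂'
  exact exists_isLinearQuotientRank_of_isMixed (by omega) (fun _ => card_eq_of_mem_hsSupports)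
    (fun _ hS hmix => mem_hsSupports_of_isMixed hs
      (fun _ hx _ hy => compl_disjUnionGraph_adj Γ₁ Γ₂ hx hy) hS hmix)
    ((isLinearQuotientRank_toColex_isMixed hs _).comp_strictMono strictMono_sum_two_pow_val)
    h₁' h₂'

end DisjUnionGraph

theorem HS_k_linearQuotients_of_disjoint_union_general
    {K : Type*} [Field K] {n m : ℕ}
    (Γ₁ : SimpleGraph (Fin n)) (Γ₂ : SimpleGraph (Fin m))
    (hp1 : natPEO Γ₁) (hp2 : natPEO Γ₂)
    (hHS1 : ∀ k : ℕ, HasLinearQuotients (Ideal.span (HSgens K Γ₁ᶜ k)))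
    (hHS2 : ∀ k : ℕ, HasLinearQuotients (Ideal.span (HSgens K Γ₂ᶜ k))) :
    natPEO (disjUnionGraph Γ₁ Γ₂) ∧
    ∀ k : ℕ, HasLinearQuotients (Ideal.span (HSgens K (disjUnionGraph Γ₁ Γ₂)ᶜ k)) := by
  refine ⟨natPEO_disjUnionGraph Γ₁ Γ₂ hp1 hp2, fun k => ?_⟩
  simp only [HSgens_eq_image (K := K)] at hHS1 hHS2 ⊢
  obtain ⟨r₁, hr₁⟩ :=
    exists_isLinearQuotientRank_of_hasLinearQuotients (fun _ => card_eq_of_mem_hsSupports) (hHS1 k)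
  obtain ⟨r₂, hr₂⟩ :=
    exists_isLinearQuotientRank_of_hasLinearQuotients (fun _ => card_eq_of_mem_hsSupports) (hHS2 k)
  obtain ⟨r, hr⟩ := exists_isLinearQuotientRank_hsSupports_compl_disjUnionGraph Γ₁ Γ₂ hr₁ hr₂
  exact hasLinearQuotients_of_isLinearQuotientRank (fun _ => card_eq_of_mem_hsSupports) hr

/-- **Proposition 3.4 (Ficarra–Herzog).**  Let `Γ₁` be a chordal graph on `[n]` and `Γ₂` a
chordal graph on `{n+1,…,n+m}` whose natural orders are perfect elimination orders, and
suppose all homological shift ideals of `I(Γ₁ᶜ)` and of `I(Γ₂ᶜ)` have linear quotients.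
Let `Γ` be the disjoint union of `Γ₁` and `Γ₂` and `G = Γᶜ`.  Then the natural order is a
perfect elimination order of `Γ = Gᶜ` and every `HS_k(I(G))` has linear quotients. -/
theorem HS_k_linearQuotients_of_disjoint_union
    {K : Type*} [Field K] {n m : ℕ}
    (Γ₁ : SimpleGraph (Fin n)) (Γ₂ : SimpleGraph (Fin m))
    (hc1 : IsChordal Γ₁) (hc2 : IsChordal Γ₂)
    (hp1 : natPEO Γ₁) (hp2 : natPEO Γ₂)
    (hHS1 : ∀ k : ℕ, HasLinearQuotients (Ideal.span (HSgens K Γ₁ᶜ k)))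
    (hHS2 : ∀ k : ℕ, HasLinearQuotients (Ideal.span (HSgens K Γ₂ᶜ k))) :
    natPEO (disjUnionGraph Γ₁ Γ₂) ∧
    ∀ k : ℕ, HasLinearQuotients (Ideal.span (HSgens K (disjUnionGraph Γ₁ Γ₂)ᶜ k)) :=
  HS_k_linearQuotients_of_disjoint_union_general Γ₁ Γ₂ hp1 hp2 hHS1 hHS2
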